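/- Let {Ω_n} be a sequence of domains in ℂⁿ converging normally to a domain Ω_∞ ⊂ ℂⁿ. Then for every z ∈ Ω_∞ and v ∈ ℂⁿ, limsup_{n→∞} C_{Ω_n}(z,v) ≤ C_{Ω_∞}(z,v). -/

import Mathlib

open Metric Set Filter MeasureTheory Asymptotics Topology

noncomputable section

/-! ### Basic setting: `ℂ²` with the Euclidean norm and Lebesgue measure -/

/-- `ℂ²` with the Euclidean norm. -/
abbrev C2 : Type := EuclideanSpace ℂ (Fin 2)

noncomputable instance : MeasurableSpace C2 := borel C2
instance : BorelSpace C2 := ⟨rfl⟩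
/-- Lebesgue measure on `ℂ²`. -/
noncomputable instance : MeasureSpace C2 :=
  ⟨Measure.map ((WithLp.equiv 2 (Fin 2 → ℂ)).symm) volume⟩

/-- The point `(a, b) ∈ ℂ²`. -/
def mk2 (a b : ℂ) : C2 := (WithLp.equiv 2 (Fin 2 → ℂ)).symm ![a, b]

/-- The `j`-th standard basis vector of `ℂ²`. -/
def stdBasis (j : Fin 2) : C2 := EuclideanSpace.single j (1 : ℂ)

section Generic

variable {E : Type*} [NormedAddCommGroup E] [NormedSpace ℂ E]
variable {E' : Type*} [NormedAddCommGroup E'] [NormedSpace ℂ E']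

/-! ### Invariant metrics -/

/-- The Kobayashi metric `K_Ω(z, X)` of a domain `Ω`:  the infimum of `‖ξ‖` over holomorphic
maps `f` of the unit disc into `Ω` with `f 0 = z` and `df₀(ξ) = X`. -/
def kobayashiMetric (Ω : Set E) (z X : E) : ℝ :=
  sInf {r : ℝ | ∃ (f : ℂ → E) (ξ : ℂ),
    DifferentiableOn ℂ f (ball (0 : ℂ) 1) ∧ MapsTo f (ball (0 : ℂ) 1) Ω ∧
    f 0 = z ∧ fderiv ℂ f 0 ξ = X ∧ r = ‖ξ‖}

/-- The Carathéodory metric `C_Ω(z, X)`:  the supremum of `|df_z(X)|` over holomorphic maps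
`f : Ω → Δ` with `f z = 0`. -/
def caratheodoryMetric (Ω : Set E) (z X : E) : ℝ :=
  sSup {r : ℝ | ∃ f : E → ℂ,
    DifferentiableOn ℂ f Ω ∧ MapsTo f Ω (ball (0 : ℂ) 1) ∧ f z = 0 ∧
    r = ‖fderivWithin ℂ f Ω z X‖}

/-- Two domains are biholomorphically equivalent. -/
def Biholomorphic (Ω₁ : Set E) (Ω₂ : Set E') : Prop :=
  ∃ (f : E → E') (g : E' → E),
    DifferentiableOn ℂ f Ω₁ ∧ DifferentiableOn ℂ g Ω₂ ∧
    MapsTo f Ω₁ Ω₂ ∧ MapsTo g Ω₂ Ω₁ ∧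
    (∀ z ∈ Ω₁, g (f z) = z) ∧ (∀ w ∈ Ω₂, f (g w) = w)

/-- Normal convergence of a sequence of domains `Ωₙ` to a domain `Ω∞`. -/
def ConvergesNormally (Ωn : ℕ → Set E) (Ωlim : Set E) : Prop :=
  (∀ K : Set E, IsCompact K →
      (∃ k : ℕ, K ⊆ interior (⋂ i ∈ {i : ℕ | k < i}, Ωn i)) → K ⊆ Ωlim) ∧
  (∀ K : Set E, IsCompact K → K ⊆ Ωlim → ∃ k : ℕ, ∀ i, k < i → K ⊆ Ωn i)

/-- The Kobayashi metric asymptotically equals the Carathéodory metric at infinity: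
`C_Ω(z,v)/K_Ω(z,v) → 1` as `z → ∂Ω`, uniformly in `v ≠ 0`. -/
def KobEqCaraAtInfinity (Ω : Set E) : Prop :=
  ∀ ε > (0 : ℝ), ∃ δ > (0 : ℝ), ∀ z ∈ Ω, infDist z (frontier Ω) < δ →
    ∀ v : E, v ≠ 0 →
      |caratheodoryMetric Ω z v / kobayashiMetric Ω z v - 1| < ε

/-- `C_Ω(z,v)/K_Ω(z,v) → 1` as `z → p`, uniformly in `v ≠ 0`. -/
def KobEqCaraAtPoint (Ω : Set E) (p : E) : Prop :=
  ∀ ε > (0 : ℝ), ∃ δ > (0 : ℝ), ∀ z ∈ Ω, dist z p < δ →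
    ∀ v : E, v ≠ 0 →
      |caratheodoryMetric Ω z v / kobayashiMetric Ω z v - 1| < ε

/-! ### Smoothly bounded pseudoconvex domains of finite type -/

/-- The Levi form of a smooth real function `ρ` at `p` evaluated at `v`, expressed through the
real Hessian:  `L_ρ(p; v) = (Hess ρ(p)(v,v) + Hess ρ(p)(iv,iv))/4`. -/
def leviForm (ρ : E → ℝ) (p v : E) : ℝ :=
  (fderiv ℝ (fun x => fderiv ℝ ρ x v) p v
    + fderiv ℝ (fun x => fderiv ℝ ρ x (Complex.I • v)) p (Complex.I • v)) / 4

/-- `v` is a complex tangent vector to the level set of `ρ` at `p`. -/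
def IsComplexTangent (ρ : E → ℝ) (p v : E) : Prop :=
  fderiv ℝ ρ p v = 0 ∧ fderiv ℝ ρ p (Complex.I • v) = 0

/-- `ρ` is a smooth defining function of `Ω` with nonvanishing gradient on the boundary
(i.e. `Ω` is smoothly bounded by the hypersurface `{ρ = 0}`). -/
structure IsDefiningFunction (Ω : Set E) (ρ : E → ℝ) : Prop where
  smooth : ContDiff ℝ (⊤ : ℕ∞) ρ
  eq_sublevel : Ω = {z : E | ρ z < 0}
  grad_ne : ∀ z ∈ frontier Ω, fderiv ℝ ρ z ≠ 0

/-- `Ω` is a smoothly bounded pseudoconvex domain with defining function `ρ`. -/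
structure IsSmoothlyBoundedPseudoconvex (Ω : Set E) (ρ : E → ℝ) : Prop where
  isOpen : IsOpen Ω
  isBounded : Bornology.IsBounded Ω
  isConnected : IsConnected Ω
  defining : IsDefiningFunction Ω ρ
  pseudoconvex : ∀ p ∈ frontier Ω, ∀ v : E, IsComplexTangent ρ p v → 0 ≤ leviForm ρ p v

/-- `∂Ω` is strongly pseudoconvex at `p` (w.r.t. the defining function `ρ`): the Levi form
is positive definite on the complex tangent space at `p`. -/
def StronglyPseudoconvexAt (ρ : E → ℝ) (p : E) : Prop :=
  ∀ v : E, v ≠ 0 → IsComplexTangent ρ p v → 0 < leviForm ρ p v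

/-- Order of vanishing at `0 ∈ ℂ` of a function `u` on `ℂ`:  the supremum of the integers `m`
with `u(ζ) = O(|ζ|^m)` as `ζ → 0`. -/
def contactOrder {F : Type*} [NormedAddCommGroup F] (u : ℂ → F) : ℕ∞ :=
  ⨆ m ∈ {m : ℕ | u =O[𝓝 (0 : ℂ)] fun ζ : ℂ => ‖ζ‖ ^ m}, (m : ℕ∞)

/-- The maximal order of contact at `p` of (possibly singular) one-dimensional complex analytic
varieties — parametrized by nonconstant holomorphic discs `φ` — with the hypersurface
`{ρ = 0}` is at most `M` (D'Angelo finite type condition at `p`). -/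
def FiniteTypeAt (ρ : E → ℝ) (p : E) (M : ℕ) : Prop :=
  ∀ φ : ℂ → E, AnalyticAt ℂ φ 0 → φ 0 = p →
    contactOrder (fun ζ => φ ζ - p) ≠ ⊤ →
    contactOrder (fun ζ => ρ (φ ζ)) ≤ (M : ℕ∞) * contactOrder (fun ζ => φ ζ - p)

/-- `Ω` (with defining function `ρ`) is of finite type: the order of contact of one-dimensional
complex analytic varieties with `∂Ω` is uniformly finite. -/
def IsFiniteType (Ω : Set E) (ρ : E → ℝ) : Prop :=
  ∃ M : ℕ, ∀ p ∈ frontier Ω, FiniteTypeAt ρ p M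

end Generic

/-! ### Ball quotients -/

/-- `Ω ⊂ ℂ²` is (biholomorphic to) a ball quotient: there is a holomorphic covering map from
the unit ball `𝔹² ⊂ ℂ²` onto `Ω`. -/
def IsBallQuotient (Ω : Set C2) : Prop :=
  ∃ f : C2 → C2, DifferentiableOn ℂ f (ball (0 : C2) 1) ∧
    SurjOn f (ball (0 : C2) 1) Ω ∧
    ∃ h : MapsTo f (ball (0 : C2) 1) Ω,
      IsCoveringMap (MapsTo.restrict f (ball (0 : C2) 1) Ω h)

/-! ### Hermitian and Kähler metrics on domains in `ℂ²` -/

/-- The real value `Σᵢₖ Aᵢₖ vᵢ conj(vₖ)` of a Hermitian matrix `A` on the vector `v`. -/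
def hermitianForm (A : Matrix (Fin 2) (Fin 2) ℂ) (v : C2) : ℝ :=
  (∑ i, ∑ k, A i k * v i * starRingEnd ℂ (v k)).re

/-- The length `√(g(z)(v,v))` of a vector `v` with respect to a Hermitian metric tensor `g`. -/
def metricNorm (g : C2 → Matrix (Fin 2) (Fin 2) ℂ) (z v : C2) : ℝ :=
  Real.sqrt (hermitianForm (g z) v)

/-- `g` is a smooth Hermitian positive-definite metric tensor on `Ω`. -/
structure IsHermitianMetricOn (Ω : Set C2) (g : C2 → Matrix (Fin 2) (Fin 2) ℂ) : Prop where
  smooth : ∀ i k, ContDiffOn ℝ (⊤ : ℕ∞) (fun z => g z i k) Ω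
  hermitian : ∀ z ∈ Ω, ∀ i k, g z i k = starRingEnd ℂ (g z k i)
  posDef : ∀ z ∈ Ω, ∀ v : C2, v ≠ 0 → 0 < hermitianForm (g z) v

/-- The Wirtinger derivative `∂f/∂z_j` (computed within `Ω`) of `f : ℂ² → ℂ`. -/
def wirtingerD (Ω : Set C2) (f : C2 → ℂ) (z : C2) (j : Fin 2) : ℂ :=
  (fderivWithin ℝ f Ω z (stdBasis j)
    - Complex.I * fderivWithin ℝ f Ω z (Complex.I • stdBasis j)) / 2

/-- The Wirtinger derivative `∂f/∂z̄_j` (computed within `Ω`) of `f : ℂ² → ℂ`. -/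
def wirtingerDbar (Ω : Set C2) (f : C2 → ℂ) (z : C2) (j : Fin 2) : ℂ :=
  (fderivWithin ℝ f Ω z (stdBasis j)
    + Complex.I * fderivWithin ℝ f Ω z (Complex.I • stdBasis j)) / 2

/-- The Kähler symmetry condition `∂g_{ik̄}/∂z_j = ∂g_{jk̄}/∂z_i`. -/
def KahlerSymmetry (Ω : Set C2) (g : C2 → Matrix (Fin 2) (Fin 2) ℂ) : Prop :=
  ∀ z ∈ Ω, ∀ i j k : Fin 2,
    wirtingerD Ω (fun w => g w i k) z j = wirtingerD Ω (fun w => g w j k) z i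

/-- `g` is a Kähler metric tensor on `Ω`. -/
def IsKahlerMetricOn (Ω : Set C2) (g : C2 → Matrix (Fin 2) (Fin 2) ℂ) : Prop :=
  IsHermitianMetricOn Ω g ∧ KahlerSymmetry Ω g

/-- The Finsler metric `F` on `Ω` is a Kähler metric with associated metric tensor `g`:
`F(z,X)² = Σᵢₖ g_{ik̄}(z) Xᵢ conj(Xₖ)` with `g` a smooth Hermitian positive-definite Kähler
metric tensor. -/
def IsKahlerFinsler (Ω : Set C2) (F : C2 → C2 → ℝ)
    (g : C2 → Matrix (Fin 2) (Fin 2) ℂ) : Prop :=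
  IsKahlerMetricOn Ω g ∧ ∀ z ∈ Ω, ∀ X : C2, (F z X) ^ 2 = hermitianForm (g z) X

/-! ### Generalized Gaussian curvature and holomorphic sectional curvature -/

/-- The generalized Laplacian
`Δu(ζ) = 4 liminf_{r→0⁺} r⁻²((1/2π)∫₀^{2π} u(ζ+re^{iθ})dθ − u(ζ))`. -/
def genLaplacian (u : ℂ → ℝ) (ζ : ℂ) : ℝ :=
  4 * liminf (fun r : ℝ =>
      (1 / r ^ 2) * ((1 / (2 * Real.pi)) *
        (∫ θ in (0 : ℝ)..(2 * Real.pi), u (ζ + (r : ℂ) * Complex.exp ((θ : ℂ) * Complex.I)))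
        - u ζ))
    (𝓝[>] (0 : ℝ))

/-- The generalized Gaussian curvature `K(g dz⊗dz̄) = −(1/2g)·Δ log g` of a pseudo-metric
on the disc at the point `ζ`. -/
def gaussCurv (g : ℂ → ℝ) (ζ : ℂ) : ℝ :=
  -(1 / (2 * g ζ)) * genLaplacian (fun w => Real.log (g w)) ζ

/-- The holomorphic sectional curvature `H(F)(p,v)` of a Finsler metric `F` on `Ω`:
the supremum of the generalized Gaussian curvatures at `0` of the pullbacks `φ*(F²)` over all
holomorphic discs `φ : Δ → Ω` with `φ(0) = p`, `φ'(0) = λv`, `λ ∈ ℂ*`. -/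
def finslerHSC (Ω : Set C2) (F : C2 → C2 → ℝ) (p v : C2) : ℝ :=
  sSup {c : ℝ | ∃ (φ : ℂ → C2) (l : ℂ), l ≠ 0 ∧
    DifferentiableOn ℂ φ (ball (0 : ℂ) 1) ∧ MapsTo φ (ball (0 : ℂ) 1) Ω ∧
    φ 0 = p ∧ fderiv ℂ φ 0 1 = l • v ∧
    c = gaussCurv (fun ζ => (F (φ ζ) (fderiv ℂ φ ζ 1)) ^ 2) 0}

/-- A Finsler metric `F` on `Ω` has constant holomorphic sectional curvature. -/
def HasConstantHSC (Ω : Set C2) (F : C2 → C2 → ℝ) : Prop :=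
  ∃ c : ℝ, ∀ p ∈ Ω, ∀ v : C2, v ≠ 0 → finslerHSC Ω F p v = c

/-! ### Quasi-finite geometry -/

/-- The pullback `φ*g` of a Hermitian metric tensor `g` by a holomorphic map `φ`:
`(φ*g)_{ik̄}(x) = Σ_{a,b} g_{ab̄}(φ x)·(∂φ_a/∂z_i)·conj(∂φ_b/∂z_k)`. -/
def pullbackMetric (g : C2 → Matrix (Fin 2) (Fin 2) ℂ) (φ : C2 → C2) (x : C2) :
    Matrix (Fin 2) (Fin 2) ℂ :=
  Matrix.of fun i k => ∑ a, ∑ b,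
    g (φ x) a b * fderiv ℂ φ x (stdBasis i) a
      * starRingEnd ℂ (fderiv ℂ φ x (stdBasis k) b)

/-- `(Ω, g)` has quasi-finite geometry of order `α` with radii `r₁ < r₂`, comparison constant
`C` and derivative bounds `A q` (`q ≤ α`): every point admits a nonsingular holomorphic chart
`φ : U → Ω`, `B_{r₁}(0) ⊆ U ⊆ B_{r₂}(0)`, with `(1/C)g₀ ≤ φ*g ≤ Cg₀` and all derivatives of
`(φ*g)_{ik̄}` up to order `q ≤ α` bounded by `A q`. -/
def HasQFGWith (Ω : Set C2) (g : C2 → Matrix (Fin 2) (Fin 2) ℂ) (α : ℕ∞)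
    (r₁ r₂ C : ℝ) (A : ℕ → ℝ) : Prop :=
  0 < r₁ ∧ r₁ < r₂ ∧ 1 ≤ C ∧
  ∀ z ∈ Ω, ∃ (U : Set C2) (φ : C2 → C2),
    IsOpen U ∧ ball (0 : C2) r₁ ⊆ U ∧ U ⊆ ball (0 : C2) r₂ ∧
    DifferentiableOn ℂ φ U ∧ MapsTo φ U Ω ∧ φ 0 = z ∧
    (∀ x ∈ U, ∀ v : C2, fderiv ℂ φ x v = 0 → v = 0) ∧
    (∀ x ∈ U, ∀ v : C2,
      (1 / C) * ‖v‖ ^ 2 ≤ hermitianForm (pullbackMetric g φ x) v ∧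
      hermitianForm (pullbackMetric g φ x) v ≤ C * ‖v‖ ^ 2) ∧
    (∀ q : ℕ, (q : ℕ∞) ≤ α → ∀ i k : Fin 2, ∀ x ∈ U,
      ‖iteratedFDerivWithin ℝ q (fun y => pullbackMetric g φ y i k) U x‖ ≤ A q)

/-- Quasi-finite geometry of order `α` (`α = ⊤` is order infinity). -/
def HasQuasiFiniteGeometry (Ω : Set C2) (g : C2 → Matrix (Fin 2) (Fin 2) ℂ) (α : ℕ∞) : Prop :=
  ∃ (r₁ r₂ C : ℝ) (A : ℕ → ℝ), HasQFGWith Ω g α r₁ r₂ C A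

/-! ### The Bergman metric and the Lu constant -/

/-- The Bergman kernel of `Ω` on the diagonal:
`κ_Ω(z,z) = sup {|f(z)|² : f ∈ 𝒪(Ω), ‖f‖_{L²(Ω)} ≤ 1}`. -/
def bergmanKernelDiag (Ω : Set C2) (z : C2) : ℝ :=
  sSup {r : ℝ | ∃ f : C2 → ℂ, DifferentiableOn ℂ f Ω ∧
    (∫ w in Ω, ‖f w‖ ^ 2) ≤ 1 ∧ r = ‖f z‖ ^ 2}

/-- The Bergman metric
`B_Ω(z,X) = κ_Ω(z,z)^{-1/2}·sup {|Xf(z)| : f ∈ 𝒪(Ω), f(z) = 0, ‖f‖_{L²(Ω)} ≤ 1}`. -/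
def bergmanMetric (Ω : Set C2) (z X : C2) : ℝ :=
  (sSup {r : ℝ | ∃ f : C2 → ℂ, DifferentiableOn ℂ f Ω ∧ f z = 0 ∧
    (∫ w in Ω, ‖f w‖ ^ 2) ≤ 1 ∧ r = ‖fderivWithin ℂ f Ω z X‖})
  / Real.sqrt (bergmanKernelDiag Ω z)

/-- The Lu constant `L(Ω) = sup {C_Ω(z,v)/B_Ω(z,v) : z ∈ Ω, v ≠ 0}`. -/
def luConstant (Ω : Set C2) : ℝ :=
  sSup {r : ℝ | ∃ z ∈ Ω, ∃ v : C2, v ≠ 0 ∧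
    r = caratheodoryMetric Ω z v / bergmanMetric Ω z v}

/-! ### The Kähler–Einstein (Cheng–Yau) metric -/

/-- Length of a path with respect to a Hermitian metric tensor `g`. -/
def metricLength (g : C2 → Matrix (Fin 2) (Fin 2) ℂ) (γ : ℝ → C2) : ℝ :=
  ∫ t in (0 : ℝ)..1, Real.sqrt (hermitianForm (g (γ t)) (deriv γ t))

/-- The distance on `Ω` induced by a Hermitian metric tensor `g`. -/
def metricDist (Ω : Set C2) (g : C2 → Matrix (Fin 2) (Fin 2) ℂ) (x y : C2) : ℝ :=
  sInf {L : ℝ | ∃ γ : ℝ → C2, ContDiffOn ℝ 1 γ (Icc (0 : ℝ) 1) ∧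
    (∀ t ∈ Icc (0 : ℝ) 1, γ t ∈ Ω) ∧ γ 0 = x ∧ γ 1 = y ∧ L = metricLength g γ}

/-- Completeness of the metric `g` on `Ω`: every Cauchy sequence for the induced distance
converges to a point of `Ω`. -/
def IsCompleteMetricOn (Ω : Set C2) (g : C2 → Matrix (Fin 2) (Fin 2) ℂ) : Prop :=
  ∀ x : ℕ → C2, (∀ n, x n ∈ Ω) →
    (∀ ε > (0 : ℝ), ∃ N : ℕ, ∀ m ≥ N, ∀ n ≥ N, metricDist Ω g (x m) (x n) < ε) →
    ∃ p ∈ Ω, Tendsto x atTop (𝓝 p)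

/-- The Einstein condition `Ric(g) = −(n+1)·g` for a Kähler metric tensor on `Ω ⊂ ℂ²`
(`n = 2`): in coordinates, `∂_i ∂̄_k log det g = 3·g_{ik̄}`. -/
def IsKahlerEinsteinOn (Ω : Set C2) (g : C2 → Matrix (Fin 2) (Fin 2) ℂ) : Prop :=
  IsKahlerMetricOn Ω g ∧
  ∀ z ∈ Ω, ∀ i k : Fin 2,
    wirtingerD Ω (fun w => wirtingerDbar Ω
        (fun y => ((Real.log ((Matrix.det (g y)).re) : ℝ) : ℂ)) w k) z i
      = 3 * g z i k

/-- `g` is the Cheng–Yau Kähler–Einstein metric of `Ω`: complete Kähler with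
`Ric ≡ −(n+1)`. -/
def IsChengYauKE (Ω : Set C2) (g : C2 → Matrix (Fin 2) (Fin 2) ℂ) : Prop :=
  IsKahlerEinsteinOn Ω g ∧ IsCompleteMetricOn Ω g

/-! ### Reinhardt domains, model domains, scaling sequences -/

/-- `Ω ⊂ ℂ²` is a Reinhardt domain. -/
def IsReinhardt (Ω : Set C2) : Prop :=
  ∀ z ∈ Ω, ∀ θ₁ θ₂ : ℝ,
    mk2 (Complex.exp ((θ₁ : ℂ) * Complex.I) * z 0)
        (Complex.exp ((θ₂ : ℂ) * Complex.I) * z 1) ∈ Ω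

/-- `P : ℂ → ℝ` is a real-valued subharmonic polynomial of degree `m` without harmonic
terms. -/
def IsModelPolynomial (P : ℂ → ℝ) (m : ℕ) : Prop :=
  (∃ c : ℕ → ℕ → ℂ,
    (∀ j, c j 0 = 0) ∧ (∀ k, c 0 k = 0) ∧ (∀ j k, m < j + k → c j k = 0) ∧
    (∃ j k, j + k = m ∧ c j k ≠ 0) ∧
    ∀ z : ℂ, P z = (∑ j ∈ Finset.range (m + 1), ∑ k ∈ Finset.range (m + 1),
      c j k * z ^ j * (starRingEnd ℂ z) ^ k).re) ∧
  ∀ z : ℂ, 0 ≤ fderiv ℝ (fun w => fderiv ℝ P w 1) z 1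
      + fderiv ℝ (fun w => fderiv ℝ P w Complex.I) z Complex.I

/-- The model domain `Ω∞ = {(z,w) ∈ ℂ² : Re w + P(z) < 0}`. -/
def modelDomain (P : ℂ → ℝ) : Set C2 := {p : C2 | (p 1).re + P (p 0) < 0}

/-- The (Catlin) scaling sequence of `Ω` at a boundary point `p` of type `m`:
`αₙ` are holomorphic automorphisms of `ℂ²` with inverses `βₙ`, such that `Ωₙ = αₙ(Ω)`
converges normally to the model domain `{Re w + P(z) < 0}` with `P` a subharmonic polynomial
of degree `m` without harmonic terms, and `αₙ⁻¹ → p` pointwise on the model domain. -/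
structure IsScalingSequence (Ω : Set C2) (p : C2) (α β : ℕ → C2 → C2)
    (P : ℂ → ℝ) (m : ℕ) : Prop where
  mem_frontier : p ∈ frontier Ω
  auto_diff : ∀ n, Differentiable ℂ (α n)
  inv_diff : ∀ n, Differentiable ℂ (β n)
  left_inv : ∀ n, Function.LeftInverse (β n) (α n)
  right_inv : ∀ n, Function.RightInverse (β n) (α n)
  model : IsModelPolynomial P m
  normal : ConvergesNormally (fun n => α n '' Ω) (modelDomain P)
  inv_tendsto : ∀ z ∈ modelDomain P, Tendsto (fun n => β n z) atTop (𝓝 p)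

end

/-! ### Auxiliary lemmas for Statement 11 -/

section Statement11Aux

open Metric Set Filter Topology

namespace CaraLimsupAux

/-- One-variable Cauchy-type estimate via the Schwarz lemma. -/
lemma deriv_bound_1d {u : ℂ → ℂ} {R M : ℝ} (hR : 0 < R)
    (hd : DifferentiableOn ℂ u (ball 0 R)) (hM : ∀ ζ ∈ ball (0:ℂ) R, ‖u ζ‖ ≤ M) :
    ‖deriv u 0‖ ≤ 2 * M / R := by
  have key : ∀ ε > (0:ℝ), ‖deriv u 0‖ ≤ (2 * M + ε) / R := by
    intro ε hε
    have hmaps : MapsTo u (ball 0 R) (ball (u 0) (2 * M + ε)) := by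
      intro ζ hζ
      have h1 := hM ζ hζ
      have h2 := hM 0 (mem_ball_self hR)
      have : dist (u ζ) (u 0) < 2 * M + ε := by
        calc dist (u ζ) (u 0) ≤ ‖u ζ‖ + ‖u 0‖ := dist_le_norm_add_norm _ _
        _ < 2 * M + ε := by linarith
      exact this
    exact Complex.norm_deriv_le_div_of_mapsTo_ball hd (hmaps.mono_right ball_subset_closedBall) hR
  refine le_of_forall_pos_le_add fun δ hδ => ?_
  have := key (δ * R) (by positivity)
  calc ‖deriv u 0‖ ≤ (2 * M + δ * R) / R := this
  _ = 2 * M / R + δ := by field_simp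


variable {E : Type*} [NormedAddCommGroup E] [NormedSpace ℂ E]

/-- The affine line map. -/
lemma lineMap_hasDerivAt (x w : E) (ζ : ℂ) :
    HasDerivAt (fun ζ : ℂ => x + ζ • w) w ζ := by
  simpa using ((hasDerivAt_id ζ).smul_const w).const_add x

/-- Multi-variable Cauchy estimate. -/
lemma fderiv_bound {f : E → ℂ} {s : Set E} (hs : IsOpen s)
    (hd : DifferentiableOn ℂ f s) {x : E} {R M : ℝ} (hR : 0 < R)
    (hball : ball x R ⊆ s) (hM : ∀ y ∈ ball x R, ‖f y‖ ≤ M) :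
    ‖fderiv ℂ f x‖ ≤ 2 * M / R := by
  have hM0 : 0 ≤ M := le_trans (norm_nonneg _) (hM x (mem_ball_self hR))
  refine ContinuousLinearMap.opNorm_le_bound _ (by positivity) fun w => ?_
  rcases eq_or_ne w 0 with rfl | hw
  · simp
  have hw0 : (0:ℝ) < ‖w‖ := norm_pos_iff.mpr hw
  set R' : ℝ := R / ‖w‖ with hR'def
  have hR' : 0 < R' := by positivity
  set L : ℂ → E := fun ζ => x + ζ • w with hLdef
  have hmaps : ∀ ζ ∈ ball (0:ℂ) R', L ζ ∈ ball x R := by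
    intro ζ hζ
    rw [mem_ball, dist_zero_right] at hζ
    have : dist (L ζ) x < R := by
      have : dist (x + ζ • w) x < R := by
        rw [dist_self_add_left, norm_smul]
        calc ‖ζ‖ * ‖w‖ < R' * ‖w‖ := by gcongr
        _ = R := by rw [hR'def]; exact div_mul_cancel₀ R hw0.ne'
      exact this
    exact this
  set u : ℂ → ℂ := fun ζ => f (L ζ) with hudef
  have hud : DifferentiableOn ℂ u (ball 0 R') := by
    intro ζ hζ
    have h1 : DifferentiableAt ℂ f (L ζ) :=
      (hd _ (hball (hmaps ζ hζ))).differentiableAt (hs.mem_nhds (hball (hmaps ζ hζ)))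
    exact (h1.comp ζ (lineMap_hasDerivAt x w ζ).differentiableAt).differentiableWithinAt
  have hder : HasDerivAt u (fderiv ℂ f x w) 0 := by
    have hfx : DifferentiableAt ℂ f x :=
      (hd x (hball (mem_ball_self hR))).differentiableAt (hs.mem_nhds (hball (mem_ball_self hR)))
    have hL0 : HasDerivAt L w 0 := lineMap_hasDerivAt x w 0
    have hfx' : HasFDerivAt f (fderiv ℂ f x) (L 0) := by
      have : L 0 = x := by simp [hLdef]
      rw [this]; exact hfx.hasFDerivAt
    exact hfx'.comp_hasDerivAt 0 hL0
  have hub : ∀ ζ ∈ ball (0:ℂ) R', ‖u ζ‖ ≤ M := fun ζ hζ => hM _ (hmaps ζ hζ)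
  have := deriv_bound_1d hR' hud hub
  rw [hder.deriv] at this
  calc ‖fderiv ℂ f x w‖ ≤ 2 * M / R' := this
  _ = 2 * M / R * ‖w‖ := by rw [hR'def]; field_simp


/-- Lipschitz estimate for a bounded holomorphic function on a ball. -/
lemma lip_bound {f : E → ℂ} {s : Set E} (hs : IsOpen s)
    (hd : DifferentiableOn ℂ f s) {x₀ : E} {r R M : ℝ} (hr : 0 ≤ r) (hR : 0 < R)
    (hball : closedBall x₀ (r + R) ⊆ s) (hM : ∀ y ∈ s, ‖f y‖ ≤ M)
    {x y : E} (hx : x ∈ closedBall x₀ r) (hy : y ∈ closedBall x₀ r) :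
    ‖f x - f y‖ ≤ 2 * M / R * ‖x - y‖ := by
  have hsub : ∀ p ∈ closedBall x₀ r, ball p R ⊆ s := by
    intro p hp q hq
    apply hball
    rw [mem_closedBall] at *
    calc dist q x₀ ≤ dist q p + dist p x₀ := dist_triangle _ _ _
    _ ≤ r + R := by rw [mem_ball] at hq; linarith
  have hdiff : ∀ p ∈ closedBall x₀ r, DifferentiableAt ℂ f p := fun p hp =>
    (hd p (hsub p hp (mem_ball_self hR))).differentiableAt
      (hs.mem_nhds (hsub p hp (mem_ball_self hR)))
  have hbd : ∀ p ∈ closedBall x₀ r, ‖fderiv ℂ f p‖ ≤ 2 * M / R := fun p hp =>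
    fderiv_bound hs hd hR (hsub p hp) (fun q hq => hM q (hsub p hp hq))
  exact (convex_closedBall x₀ r).norm_image_sub_le_of_norm_fderiv_le hdiff hbd hy hx


/-- Lipschitz estimate for the derivative of a bounded holomorphic function. -/
lemma fderiv_lip {f : E → ℂ} {s : Set E} (hs : IsOpen s)
    (hd : DifferentiableOn ℂ f s) {x₀ : E} {r R M : ℝ} (hr : 0 ≤ r) (hR : 0 < R)
    (hM0 : 0 ≤ M)
    (hball : closedBall x₀ (r + 2 * R) ⊆ s) (hM : ∀ y ∈ s, ‖f y‖ ≤ M)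
    {x y : E} (hx : x ∈ closedBall x₀ r) (hy : y ∈ closedBall x₀ r) :
    ‖fderiv ℂ f x - fderiv ℂ f y‖ ≤ 4 * M / R ^ 2 * ‖x - y‖ := by
  have hball1 : closedBall x₀ ((r + R) + R) ⊆ s := by
    refine subset_trans (fun p hp => ?_) hball
    rw [mem_closedBall] at *; linarith
  -- Lipschitz constant for f on closedBall x₀ (r + R)
  have hlip : ∀ p q : E, p ∈ closedBall x₀ (r + R) → q ∈ closedBall x₀ (r + R) →
      ‖f p - f q‖ ≤ 2 * M / R * ‖p - q‖ := fun p q hp hq =>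
    lip_bound hs hd (by linarith) hR hball1 hM hp hq
  refine ContinuousLinearMap.opNorm_le_bound _ (by positivity) fun w => ?_
  rcases eq_or_ne w 0 with rfl | hw
  · simp
  have hw0 : (0:ℝ) < ‖w‖ := norm_pos_iff.mpr hw
  set R' : ℝ := R / ‖w‖ with hR'def
  have hR' : 0 < R' := by positivity
  have hmaps : ∀ p ∈ closedBall x₀ r, ∀ ζ ∈ ball (0:ℂ) R', p + ζ • w ∈ closedBall x₀ (r + R) := by
    intro p hp ζ hζ
    rw [mem_ball, dist_zero_right] at hζ
    rw [mem_closedBall] at *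
    calc dist (p + ζ • w) x₀ ≤ dist (p + ζ • w) p + dist p x₀ := dist_triangle _ _ _
    _ ≤ R + r := by
        have h1 : dist (p + ζ • w) p = ‖ζ‖ * ‖w‖ := by rw [dist_self_add_left, norm_smul]
        rw [h1]
        have h2 : ‖ζ‖ * ‖w‖ ≤ R := by
          calc ‖ζ‖ * ‖w‖ ≤ R' * ‖w‖ := by gcongr
          _ = R := by rw [hR'def]; exact div_mul_cancel₀ R hw0.ne'
        linarith
    _ = r + R := by ring
  have hmem : ∀ p ∈ closedBall x₀ (r + R), p ∈ s := fun p hp =>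
    hball1 (by rw [mem_closedBall] at *; linarith)
  -- the one-variable difference function
  set V : ℂ → ℂ := fun ζ => f (x + ζ • w) - f (y + ζ • w) with hVdef
  have hcomp : ∀ (p : E), p ∈ closedBall x₀ r → ∀ ζ ∈ ball (0:ℂ) R',
      DifferentiableAt ℂ (fun ζ : ℂ => f (p + ζ • w)) ζ := by
    intro p hp ζ hζ
    have h1 : DifferentiableAt ℂ f (p + ζ • w) :=
      (hd _ (hmem _ (hmaps p hp ζ hζ))).differentiableAt (hs.mem_nhds (hmem _ (hmaps p hp ζ hζ)))
    exact h1.comp ζ (lineMap_hasDerivAt p w ζ).differentiableAt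
  have hVd : DifferentiableOn ℂ V (ball 0 R') := by
    intro ζ hζ
    exact ((hcomp x hx ζ hζ).sub (hcomp y hy ζ hζ)).differentiableWithinAt
  have hVb : ∀ ζ ∈ ball (0:ℂ) R', ‖V ζ‖ ≤ 2 * M / R * ‖x - y‖ := by
    intro ζ hζ
    have := hlip (x + ζ • w) (y + ζ • w) (hmaps x hx ζ hζ) (hmaps y hy ζ hζ)
    have heq : x + ζ • w - (y + ζ • w) = x - y := by abel
    rw [heq] at this
    exact this
  have hVder : HasDerivAt V (fderiv ℂ f x w - fderiv ℂ f y w) 0 := by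
    have hder : ∀ (p : E), p ∈ closedBall x₀ r →
        HasDerivAt (fun ζ : ℂ => f (p + ζ • w)) (fderiv ℂ f p w) 0 := by
      intro p hp
      have hp' : p ∈ closedBall x₀ (r + R) := by
        have := hmaps p hp 0 (mem_ball_self hR')
        simpa using this
      have hfp : DifferentiableAt ℂ f p :=
        (hd p (hmem _ hp')).differentiableAt (hs.mem_nhds (hmem _ hp'))
      have hfx' : HasFDerivAt f (fderiv ℂ f p) (p + (0:ℂ) • w) := by
        have : p + (0:ℂ) • w = p := by simp
        rw [this]; exact hfp.hasFDerivAt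
      exact hfx'.comp_hasDerivAt 0 (lineMap_hasDerivAt p w 0)
    exact (hder x hx).sub (hder y hy)
  have := deriv_bound_1d hR' hVd hVb
  rw [hVder.deriv] at this
  have hfin : ‖fderiv ℂ f x w - fderiv ℂ f y w‖ ≤ 4 * M / R ^ 2 * ‖x - y‖ * ‖w‖ := by
    calc ‖fderiv ℂ f x w - fderiv ℂ f y w‖ ≤ 2 * (2 * M / R * ‖x - y‖) / R' := this
    _ = 4 * M / R ^ 2 * ‖x - y‖ * ‖w‖ := by rw [hR'def]; field_simp; ring
  calc ‖(fderiv ℂ f x - fderiv ℂ f y) w‖ = ‖fderiv ℂ f x w - fderiv ℂ f y w‖ := by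
        rw [ContinuousLinearMap.sub_apply]
  _ ≤ 4 * M / R ^ 2 * ‖x - y‖ * ‖w‖ := hfin


/-- Pointwise convergence plus a uniform Lipschitz bound gives uniform convergence
on a compact set. -/
lemma tendstoUniformlyOn_of_lip {ι : Type*} {l : Filter ι} [l.NeBot]
    {E Y : Type*} [NormedAddCommGroup E] [NormedAddCommGroup Y]
    {F : ι → E → Y} {G : E → Y} {K : Set E} (hK : IsCompact K) {L : ℝ} (hL : 0 ≤ L)
    (hlip : ∀ᶠ i in l, ∀ x ∈ K, ∀ y ∈ K, ‖F i x - F i y‖ ≤ L * ‖x - y‖)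
    (hpt : ∀ x ∈ K, Tendsto (fun i => F i x) l (𝓝 (G x))) :
    TendstoUniformlyOn F G l K := by
  have hGlip : ∀ x ∈ K, ∀ y ∈ K, ‖G x - G y‖ ≤ L * ‖x - y‖ := by
    intro x hx y hy
    refine le_of_tendsto (((hpt x hx).sub (hpt y hy)).norm) ?_
    exact hlip.mono fun i hi => hi x hx y hy
  rw [Metric.tendstoUniformlyOn_iff]
  intro ε hε
  set δ : ℝ := ε / 3 / (L + 1) with hδdef
  have hδ : 0 < δ := by positivity
  -- finite cover of K by balls of radius δ
  obtain ⟨T, hTK, hTcov⟩ := hK.elim_nhds_subcover (fun x => ball x δ)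
    (fun x _ => ball_mem_nhds x hδ)
  have hTev : ∀ᶠ i in l, ∀ t ∈ T, dist (G t) (F i t) < ε / 3 := by
    rw [eventually_all_finset]
    intro t ht
    have := (hpt t (hTK t ht))
    have h2 : Tendsto (fun i => dist (G t) (F i t)) l (𝓝 0) := by
      simpa [dist_comm] using tendsto_iff_dist_tendsto_zero.mp this
    exact (h2.eventually (eventually_lt_nhds (by positivity : (0:ℝ) < ε/3)))
  filter_upwards [hTev, hlip] with i hiT hiL
  intro x hx
  obtain ⟨t, htT, hxt⟩ : ∃ t ∈ T, x ∈ ball t δ := by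
    have := hTcov hx
    simpa using this
  have h1 : ‖G x - G t‖ ≤ L * ‖x - t‖ := hGlip x hx t (hTK t htT)
  have h2 : ‖F i t - F i x‖ ≤ L * ‖t - x‖ := hiL t (hTK t htT) x hx
  have hxtd : ‖x - t‖ < δ := by rwa [mem_ball, dist_eq_norm] at hxt
  have htxd : ‖t - x‖ < δ := by rwa [norm_sub_rev]
  have hLd : L * δ ≤ ε / 3 := by
    rw [hδdef]
    rw [mul_comm]
    rw [div_mul_eq_mul_div, div_le_iff₀ (by positivity)]
    nlinarith [hε.le]
  calc dist (G x) (F i x) ≤ dist (G x) (F i t) + dist (F i t) (F i x) := dist_triangle _ _ _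
  _ ≤ dist (G x) (G t) + dist (G t) (F i t) + dist (F i t) (F i x) := by
      have := dist_triangle (G x) (G t) (F i t); linarith
  _ < ε / 3 + ε / 3 + ε / 3 := by
      have e1 : dist (G x) (G t) ≤ ε / 3 := by
        rw [dist_eq_norm]
        calc ‖G x - G t‖ ≤ L * ‖x - t‖ := h1
        _ ≤ L * δ := by nlinarith
        _ ≤ ε / 3 := hLd
      have e2 : dist (F i t) (F i x) ≤ ε / 3 := by
        rw [dist_eq_norm]
        calc ‖F i t - F i x‖ ≤ L * ‖t - x‖ := h2
        _ ≤ L * δ := by nlinarith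
        _ ≤ ε / 3 := hLd
      have e3 := hiT t htT
      linarith
  _ = ε := by ring


/-- The competitor set for the Carathéodory metric is bounded above. -/
lemma carath_bddAbove {Ω : Set E} (hΩ : IsOpen Ω) {z : E} (hz : z ∈ Ω) (X : E) :
    BddAbove {r : ℝ | ∃ f : E → ℂ,
      DifferentiableOn ℂ f Ω ∧ MapsTo f Ω (ball (0:ℂ) 1) ∧ f z = 0 ∧
      r = ‖fderivWithin ℂ f Ω z X‖} := by
  obtain ⟨R, hR, hball⟩ := Metric.isOpen_iff.mp hΩ z hz
  refine ⟨2 * 1 / R * ‖X‖, ?_⟩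
  rintro r ⟨f, hd, hm, -, rfl⟩
  rw [fderivWithin_of_isOpen hΩ hz]
  calc ‖fderiv ℂ f z X‖ ≤ ‖fderiv ℂ f z‖ * ‖X‖ := (fderiv ℂ f z).le_opNorm X
  _ ≤ 2 * 1 / R * ‖X‖ := by
      gcongr
      exact fderiv_bound hΩ hd hR hball fun y hy => (mem_ball_zero_iff.mp (hm (hball hy))).le


set_option maxHeartbeats 1000000 in
set_option synthInstance.maxHeartbeats 200000 in
theorem main_gen {E' : Type*} [NormedAddCommGroup E'] [NormedSpace ℂ E']
    [FiniteDimensional ℂ E'] (Ωn : ℕ → Set E')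
    (Ωlim : Set E')
    (hopen : ∀ i, IsOpen (Ωn i))
    (hlimOpen : IsOpen Ωlim)
    (hconv : ConvergesNormally Ωn Ωlim) :
    ∀ z ∈ Ωlim, ∀ v : E',
      limsup (fun i => caratheodoryMetric (Ωn i) z v) atTop
        ≤ caratheodoryMetric Ωlim z v := by
  intro z hz v
  haveI : ProperSpace (E' →L[ℂ] ℂ) := FiniteDimensional.proper ℂ _
  have hnonneg : ∀ (Ω : Set E'), 0 ≤ caratheodoryMetric Ω z v := by
    intro Ω
    apply Real.sSup_nonneg
    rintro r ⟨f, -, -, -, rfl⟩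
    exact norm_nonneg _
  set C := caratheodoryMetric Ωlim z v with hCdef
  have key : ∀ c : ℝ, C < c → ∀ᶠ i in atTop, caratheodoryMetric (Ωn i) z v ≤ c := by
    intro c hc
    by_contra hcon
    rw [Filter.not_eventually] at hcon
    have hc0 : 0 < c := lt_of_le_of_lt (hnonneg _) hc
    set A : Set ℕ := {i | ¬ caratheodoryMetric (Ωn i) z v ≤ c} with hAdef
    have hne : NeBot ((atTop : Filter ℕ) ⊓ 𝓟 A) := frequently_iff_neBot.mp hcon
    set U : Ultrafilter ℕ := @Ultrafilter.of _ (atTop ⊓ 𝓟 A) hne with hUdef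
    have hUle : (U : Filter ℕ) ≤ atTop ⊓ 𝓟 A := Ultrafilter.of_le _
    have hUtop : (U : Filter ℕ) ≤ atTop := hUle.trans inf_le_left
    have hUA : ∀ᶠ i in (U : Filter ℕ), i ∈ A := by
      have h := hUle.trans inf_le_right
      exact le_principal_iff.mp h
    have hevK : ∀ K : Set E', IsCompact K → K ⊆ Ωlim →
        ∀ᶠ i in (U : Filter ℕ), K ⊆ Ωn i := by
      intro K hK hKsub
      obtain ⟨k, hk⟩ := hconv.2 K hK hKsub
      apply hUtop
      filter_upwards [eventually_gt_atTop k] with i hi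
      exact hk i hi
    -- choose near-extremal functions
    have hpick : ∀ i : ℕ, ∃ g : E' → ℂ, i ∈ A →
        DifferentiableOn ℂ g (Ωn i) ∧ MapsTo g (Ωn i) (ball (0:ℂ) 1) ∧ g z = 0 ∧
        c < ‖fderivWithin ℂ g (Ωn i) z v‖ := by
      intro i
      by_cases hi : i ∈ A
      · have h1 : c < caratheodoryMetric (Ωn i) z v := not_le.mp hi
        have h1' : c < sSup {r : ℝ | ∃ g : E' → ℂ, DifferentiableOn ℂ g (Ωn i) ∧
            MapsTo g (Ωn i) (ball (0:ℂ) 1) ∧ g z = 0 ∧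
            r = ‖fderivWithin ℂ g (Ωn i) z v‖} := h1
        have hSne : {r : ℝ | ∃ g : E' → ℂ, DifferentiableOn ℂ g (Ωn i) ∧
            MapsTo g (Ωn i) (ball (0:ℂ) 1) ∧ g z = 0 ∧
            r = ‖fderivWithin ℂ g (Ωn i) z v‖}.Nonempty := by
          by_contra h
          rw [Set.not_nonempty_iff_eq_empty] at h
          rw [h, Real.sSup_empty] at h1'
          linarith
        obtain ⟨r, hrS, hr⟩ := exists_lt_of_lt_csSup hSne h1'
        obtain ⟨g, hg1, hg2, hg3, rfl⟩ := hrS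
        exact ⟨g, fun _ => ⟨hg1, hg2, hg3, hr⟩⟩
      · exact ⟨0, fun h => absurd h hi⟩
    choose f hf using hpick
    -- pointwise limits exist
    have hlim1 : ∀ x, x ∈ Ωlim → ∃ a : ℂ, Tendsto (fun i => f i x) (U : Filter ℕ) (𝓝 a) := by
      intro x hx
      have hev : ∀ᶠ i in (U : Filter ℕ), f i x ∈ closedBall (0:ℂ) 1 := by
        filter_upwards [hevK {x} isCompact_singleton (singleton_subset_iff.mpr hx), hUA]
          with i h1 h2
        exact ball_subset_closedBall ((hf i h2).2.1 (h1 rfl))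
      have hprin : (↑(U.map (fun i => f i x)) : Filter ℂ) ≤ 𝓟 (closedBall (0:ℂ) 1) := by
        rw [Ultrafilter.coe_map, Filter.le_principal_iff, Filter.mem_map]
        exact hev
      obtain ⟨a, -, ha⟩ := (isCompact_closedBall (0:ℂ) 1).ultrafilter_le_nhds
        (U.map (fun i => f i x)) hprin
      rw [Ultrafilter.coe_map] at ha
      exact ⟨a, ha⟩
    set g : E' → ℂ := fun x => limUnder (U : Filter ℕ) (fun i => f i x) with hgdef
    have hg : ∀ x ∈ Ωlim, Tendsto (fun i => f i x) (U : Filter ℕ) (𝓝 (g x)) := fun x hx =>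
      tendsto_nhds_limUnder (hlim1 x hx)
    -- derivative limits exist
    have hlim2 : ∀ x, x ∈ Ωlim →
        ∃ T : E' →L[ℂ] ℂ, Tendsto (fun i => fderiv ℂ (f i) x) (U : Filter ℕ) (𝓝 T) := by
      intro x hx
      obtain ⟨R, hR, hball⟩ := Metric.isOpen_iff.mp hlimOpen x hx
      have hR2 : (0:ℝ) < R/2 := by linarith
      have hcb : closedBall x (R/2) ⊆ Ωlim :=
        subset_trans (closedBall_subset_ball (by linarith)) hball
      have hev : ∀ᶠ i in (U : Filter ℕ),
          fderiv ℂ (f i) x ∈ closedBall (0 : E' →L[ℂ] ℂ) (2 * 1 / (R/2)) := by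
        filter_upwards [hevK _ (isCompact_closedBall x (R/2)) hcb, hUA] with i h1 h2
        rw [mem_closedBall_zero_iff]
        refine fderiv_bound (hopen i) (hf i h2).1 hR2
          (subset_trans ball_subset_closedBall h1) fun y hy => ?_
        exact (mem_ball_zero_iff.mp ((hf i h2).2.1
          (h1 (ball_subset_closedBall hy)))).le
      have hprin : (↑(U.map (fun i => fderiv ℂ (f i) x)) : Filter (E' →L[ℂ] ℂ))
          ≤ 𝓟 (closedBall (0 : E' →L[ℂ] ℂ) (2 * 1 / (R/2))) := by
        rw [Ultrafilter.coe_map, Filter.le_principal_iff, Filter.mem_map]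
        exact hev
      obtain ⟨T, -, hT⟩ := (isCompact_closedBall (0 : E' →L[ℂ] ℂ) (2 * 1 / (R/2))).ultrafilter_le_nhds
        (U.map (fun i => fderiv ℂ (f i) x)) hprin
      rw [Ultrafilter.coe_map] at hT
      exact ⟨T, hT⟩
    set h : E' → (E' →L[ℂ] ℂ) := fun x => limUnder (U : Filter ℕ) (fun i => fderiv ℂ (f i) x)
      with hhdef
    have hh : ∀ x ∈ Ωlim, Tendsto (fun i => fderiv ℂ (f i) x) (U : Filter ℕ) (𝓝 (h x)) :=
      fun x hx => tendsto_nhds_limUnder (hlim2 x hx)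
    -- g is differentiable with derivative h on Ωlim
    have hder : ∀ x ∈ Ωlim, HasFDerivAt g (h x) x := by
      intro x₀ hx₀
      obtain ⟨ε, hε, hball⟩ := Metric.isOpen_iff.mp hlimOpen x₀ hx₀
      set ρ : ℝ := ε/6 with hρdef
      have hρ : 0 < ρ := by positivity
      have hcb5 : closedBall x₀ (5*ρ) ⊆ Ωlim := by
        refine subset_trans (closedBall_subset_ball ?_) hball
        rw [hρdef]; linarith
      have hevKi : ∀ᶠ i in (U : Filter ℕ), closedBall x₀ (5*ρ) ⊆ Ωn i :=
        hevK _ (isCompact_closedBall _ _) hcb5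
      -- uniform convergence of derivatives on closedBall x₀ ρ
      have hunif : TendstoUniformlyOn (fun i x => fderiv ℂ (f i) x) h (U : Filter ℕ)
          (closedBall x₀ ρ) := by
        refine tendstoUniformlyOn_of_lip (isCompact_closedBall _ _)
          (L := 4 * 1 / (2*ρ)^2) (by positivity) ?_ ?_
        · filter_upwards [hevKi, hUA] with i h1 h2
          intro x hx y hy
          refine fderiv_lip (hopen i) (hf i h2).1 hρ.le (by positivity) (by norm_num)
            ?_ (fun p hp => (mem_ball_zero_iff.mp ((hf i h2).2.1 hp)).le) hx hy
          refine subset_trans (fun p hp => ?_) h1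
          rw [mem_closedBall] at *
          linarith
        · intro x hx
          exact hh x (hcb5 (closedBall_subset_closedBall (by linarith) hx))
      -- apply the uniform-limit-of-derivatives theorem
      refine hasFDerivAt_of_tendstoUniformlyOnFilter (l := (U : Filter ℕ)) (𝕜 := ℂ)
        (f := f) (f' := fun i x => fderiv ℂ (f i) x) (g := g) (g' := h) ?_ ?_ ?_
      · have h1 : TendstoUniformlyOnFilter (fun i x => fderiv ℂ (f i) x) h (U : Filter ℕ)
            (𝓟 (closedBall x₀ ρ)) := (tendstoUniformlyOn_iff_tendstoUniformlyOnFilter).mp hunif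
        exact h1.mono_right (le_principal_iff.mpr (closedBall_mem_nhds x₀ hρ))
      · have h2 : {i : ℕ | (closedBall x₀ (5*ρ) ⊆ Ωn i) ∧ i ∈ A} ×ˢ (ball x₀ ρ) ∈
            (U : Filter ℕ) ×ˢ (𝓝 x₀) :=
          Filter.prod_mem_prod (hevKi.and hUA) (isOpen_ball.mem_nhds (mem_ball_self hρ))
        filter_upwards [h2] with p hp
        rw [Set.mem_prod] at hp
        obtain ⟨⟨hp1, hp2⟩, hp3⟩ := hp
        have hmem : p.2 ∈ Ωn p.1 :=
          hp1 (ball_subset_closedBall (ball_subset_ball (by linarith) hp3))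
        have hdiffAt : DifferentiableAt ℂ (f p.1) p.2 :=
          ((hf p.1 hp2).1 p.2 hmem).differentiableAt ((hopen p.1).mem_nhds hmem)
        exact hdiffAt.hasFDerivAt
      · filter_upwards [hlimOpen.eventually_mem hx₀] with y hy
        exact hg y hy
    -- properties of g
    have hgd : DifferentiableOn ℂ g Ωlim := fun x hx =>
      (hder x hx).differentiableAt.differentiableWithinAt
    have hgb : ∀ x ∈ Ωlim, ‖g x‖ ≤ 1 := by
      intro x hx
      refine le_of_tendsto (hg x hx).norm ?_
      filter_upwards [hevK {x} isCompact_singleton (singleton_subset_iff.mpr hx), hUA]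
        with i h1 h2
      exact (mem_ball_zero_iff.mp ((hf i h2).2.1 (h1 rfl))).le
    have hgz : g z = 0 := by
      have h0 : Tendsto (fun i => f i z) (U : Filter ℕ) (𝓝 0) := by
        refine Tendsto.congr' ?_ tendsto_const_nhds
        filter_upwards [hUA] with i hi
        exact ((hf i hi).2.2.1).symm
      exact tendsto_nhds_unique (hg z hz) h0
    have hderz : c ≤ ‖h z v‖ := by
      have hevz : ∀ᶠ i in (U : Filter ℕ), z ∈ Ωn i := by
        filter_upwards [hevK {z} isCompact_singleton (singleton_subset_iff.mpr hz)]
          with i hi using hi rfl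
      have h1 : Tendsto (fun i => fderiv ℂ (f i) z v) (U : Filter ℕ) (𝓝 (h z v)) := by
        have hcont : Continuous (fun T : E' →L[ℂ] ℂ => T v) :=
          (ContinuousLinearMap.apply ℂ ℂ v).continuous
        exact (hcont.tendsto (h z)).comp (hh z hz)
      refine ge_of_tendsto h1.norm ?_
      filter_upwards [hUA, hevz] with i hi hzi
      have := (hf i hi).2.2.2
      rw [fderivWithin_of_isOpen (hopen i) hzi] at this
      exact this.le
    -- build the competitor on Ωlim and contradict C < c
    have hC0 : 0 ≤ C := hnonneg Ωlim
    set t : ℝ := (C + c) / (2 * c) with htdef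
    have ht0 : 0 < t := div_pos (by linarith) (by linarith)
    have ht1 : t < 1 := by
      rw [htdef, div_lt_one (by positivity)]
      linarith
    set G : E' → ℂ := fun x => (t : ℂ) * g x with hGdef
    have hGd : DifferentiableOn ℂ G Ωlim := hgd.const_mul _
    have hGm : MapsTo G Ωlim (ball (0:ℂ) 1) := by
      intro x hx
      rw [mem_ball_zero_iff, hGdef]
      have : ‖(t:ℂ) * g x‖ = t * ‖g x‖ := by
        rw [norm_mul, Complex.norm_real, Real.norm_of_nonneg ht0.le]
      rw [this]
      calc t * ‖g x‖ ≤ t * 1 := by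
            have := hgb x hx
            nlinarith
      _ < 1 := by linarith
    have hGz : G z = 0 := by rw [hGdef]; simp [hgz]
    have hGr : ‖fderivWithin ℂ G Ωlim z v‖ ∈ {r : ℝ | ∃ f : E' → ℂ,
        DifferentiableOn ℂ f Ωlim ∧ MapsTo f Ωlim (ball (0:ℂ) 1) ∧ f z = 0 ∧
        r = ‖fderivWithin ℂ f Ωlim z v‖} := ⟨G, hGd, hGm, hGz, rfl⟩
    have hval : C < ‖fderivWithin ℂ G Ωlim z v‖ := by
      rw [fderivWithin_of_isOpen hlimOpen hz]
      have hgdiff : DifferentiableAt ℂ g z := (hder z hz).differentiableAt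
      have h1 : fderiv ℂ G z = (t:ℂ) • fderiv ℂ g z := by
        rw [hGdef]
        exact fderiv_const_mul hgdiff _
      have h2 : fderiv ℂ g z = h z := (hder z hz).fderiv
      rw [h1, h2]
      have h3 : ‖((t:ℂ) • h z) v‖ = t * ‖h z v‖ := by
        rw [ContinuousLinearMap.smul_apply, norm_smul, Complex.norm_real,
          Real.norm_of_nonneg ht0.le]
      rw [h3]
      have : t * c ≤ t * ‖h z v‖ := by nlinarith
      have htc : C < t * c := by
        rw [htdef]
        rw [div_mul_eq_mul_div, lt_div_iff₀ (by positivity)]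
        nlinarith
      linarith
    have hle : ‖fderivWithin ℂ G Ωlim z v‖ ≤ C :=
      le_csSup (carath_bddAbove hlimOpen hz v) hGr
    linarith
  -- conclude the limsup bound
  rw [Filter.limsup_eq]
  have hbdd : BddBelow {a : ℝ | ∀ᶠ i in atTop, caratheodoryMetric (Ωn i) z v ≤ a} := by
    refine ⟨0, fun a ha => ?_⟩
    obtain ⟨i, hi⟩ := ha.exists
    exact le_trans (hnonneg _) hi
  refine le_of_forall_pos_le_add fun ε hε => ?_
  exact csInf_le hbdd (key (C + ε) (lt_add_of_pos_right _ hε))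


end CaraLimsupAux

end Statement11Aux

/-- Let `{Ωₙ}` be a sequence of domains in `ℂⁿ` converging normally to a
domain `Ω∞ ⊂ ℂⁿ`.  Then for every `z ∈ Ω∞` and `v ∈ ℂⁿ`,
`limsup_{n→∞} C_{Ωₙ}(z,v) ≤ C_{Ω∞}(z,v)`. -/
theorem caratheodory_limsup_le_of_convergesNormally
    {n : ℕ} (Ωn : ℕ → Set (EuclideanSpace ℂ (Fin n)))
    (Ωlim : Set (EuclideanSpace ℂ (Fin n)))
    (hopen : ∀ i, IsOpen (Ωn i)) (hconn : ∀ i, IsConnected (Ωn i))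
    (hlimOpen : IsOpen Ωlim) (hlimConn : IsConnected Ωlim)
    (hconv : ConvergesNormally Ωn Ωlim) :
    ∀ z ∈ Ωlim, ∀ v : EuclideanSpace ℂ (Fin n),
      limsup (fun i => caratheodoryMetric (Ωn i) z v) atTop
        ≤ caratheodoryMetric Ωlim z v := by
  exact CaraLimsupAux.main_gen Ωn Ωlim hopen hlimOpen hconv
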